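/- (Expected error bound under the small-σ condition.) Let ε ∈ (0,1], c ∈ (0,1], and suppose 0 < σ < (1/35)·√(ε·c/(τ·d³·max(L,1))). Then E_{g~N(0,I_d)}[σ⁴·τ²·‖g‖⁶ + 2·σ²·τ·L·‖g‖⁴] ≤ ε, where the expectation is over a standard Gaussian vector g on ℝ^d. -/

import Mathlib

/-!
By the power-mean inequality `‖g‖^(2k) ≤ d^(k-1) ∑ᵢ gᵢ^(2k)`, and since each coordinate is a
standard normal with `E[gᵢ^(2k)] = (2k-1)‼`, we get `E‖g‖⁴ ≤ 3d²` and `E‖g‖⁶ ≤ 15d³`.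
Writing `A = σ²τd³·max(L,1)`, the expectation is then at most `15A² + 6A`, and the
small-σ condition gives `A < εc/35² ≤ ε/1225`.
-/

open MeasureTheory ProbabilityTheory
open scoped RealInnerProductSpace

/-- The standard Gaussian measure `N(0, I_n)` on `ℝ^n`. -/
noncomputable def stdGaussian (n : ℕ) : Measure (EuclideanSpace ℝ (Fin n)) :=
  (Measure.pi (fun _ => gaussianReal 0 1)).map (MeasurableEquiv.toLp 2 (Fin n → ℝ))

open Real Set
open scoped Nat

lemma integral_pow_mul_exp_neg_half_sq (k : ℕ) :
    ∫ x : ℝ, x ^ (2 * k) * exp (-(1 / 2) * x ^ 2) = √(2 * π) * (2 * k - 1 : ℕ)‼ := by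
  have h_even : ∫ x : ℝ, x ^ (2 * k) * exp (-(1 / 2) * x ^ 2)
      = 2 * ∫ x in Ioi (0 : ℝ), x ^ (2 * k : ℝ) * exp (-(1 / 2) * x ^ (2 : ℝ)) := by
    rw [← integral_comp_abs]
    congr 1 with x
    norm_cast
    rw [pow_mul, pow_mul, sq_abs]
  have h_half : (1 / 2 : ℝ) ^ (-((2 * k : ℝ) + 1) / 2) = 2 ^ k * √2 := by
    rw [one_div, inv_rpow zero_le_two, ← rpow_neg zero_le_two, sqrt_eq_rpow, ← rpow_natCast,
      ← rpow_add zero_lt_two]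
    ring_nf
  rw [h_even, integral_rpow_mul_exp_neg_mul_rpow zero_lt_two
    (by linarith [(Nat.cast_nonneg k : (0 : ℝ) ≤ k)]) one_half_pos, h_half,
    show ((2 * k : ℝ) + 1) / 2 = k + 1 / 2 by ring, Gamma_nat_add_half, sqrt_mul zero_le_two]
  field_simp

lemma integral_pow_two_mul_gaussianReal (k : ℕ) :
    ∫ x, x ^ (2 * k) ∂gaussianReal 0 1 = (2 * k - 1 : ℕ)‼ := by
  have h_pdf (x : ℝ) : gaussianPDFReal 0 1 x = (√(2 * π))⁻¹ * exp (-(1 / 2) * x ^ 2) := by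
    simp only [gaussianPDFReal, NNReal.coe_one, mul_one, sub_zero]
    ring_nf
  rw [integral_gaussianReal_eq_integral_smul one_ne_zero]
  simp_rw [h_pdf, smul_eq_mul, mul_assoc, mul_comm (exp _)]
  rw [integral_const_mul, integral_pow_mul_exp_neg_half_sq]
  field_simp

lemma integrable_pow_gaussianReal (n : ℕ) :
    Integrable (fun x : ℝ => x ^ n) (gaussianReal 0 1) :=
  ((memLp_id_gaussianReal n).integrable_norm_pow' (f := id)).mono' (by fun_prop)
    (ae_of_all _ fun x => (norm_pow x n).le)

lemma norm_pow_le_card_pow_mul_sum_pow {ι : Type*} [Fintype ι] (g : EuclideanSpace ℝ ι) (k : ℕ) :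
    ‖g‖ ^ (2 * (k + 1)) ≤ Fintype.card ι ^ k * ∑ i, g i ^ (2 * (k + 1)) := by
  simpa [pow_mul, EuclideanSpace.real_norm_sq_eq] using
    pow_sum_le_card_mul_sum_pow (s := Finset.univ) (f := fun i => g i ^ 2)
      (fun _ _ => sq_nonneg _) k

lemma stdGaussian_eq (d : ℕ) :
    stdGaussian d = ProbabilityTheory.stdGaussian (EuclideanSpace ℝ (Fin d)) :=
  map_pi_eq_stdGaussian

lemma integrable_norm_pow_stdGaussian (d n : ℕ) :
    Integrable (fun g => ‖g‖ ^ n) (stdGaussian d) := by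
  rw [stdGaussian_eq]
  exact (IsGaussian.memLp_id _ n (by simp)).integrable_norm_pow'

lemma measurePreserving_eval_stdGaussian (d : ℕ) (i : Fin d) :
    MeasurePreserving (fun g : EuclideanSpace ℝ (Fin d) => g i) (stdGaussian d)
      (gaussianReal 0 1) where
  measurable := by fun_prop
  map_eq := by
    rw [_root_.stdGaussian, Measure.map_map (by fun_prop) (by fun_prop)]
    exact (measurePreserving_eval (fun _ => gaussianReal 0 1) i).map_eq

lemma integral_norm_pow_stdGaussian_le (d k : ℕ) :
    ∫ g, ‖g‖ ^ (2 * (k + 1)) ∂(stdGaussian d) ≤ d ^ (k + 1) * (2 * k + 1 : ℕ)‼ := by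
  have h_eval (i : Fin d) := measurePreserving_eval_stdGaussian d i
  have h_int (i : Fin d) : Integrable (fun g : EuclideanSpace ℝ (Fin d) => g i ^ (2 * (k + 1)))
      (stdGaussian d) :=
    (h_eval i).integrable_comp_of_integrable (integrable_pow_gaussianReal _)
  have h_moment (i : Fin d) :
      ∫ g, g i ^ (2 * (k + 1)) ∂(stdGaussian d) = (2 * k + 1 : ℕ)‼ := by
    have h := integral_map (h_eval i).aemeasurable
      (f := fun x : ℝ => x ^ (2 * (k + 1))) (by fun_prop)
    rw [(h_eval i).map_eq, integral_pow_two_mul_gaussianReal] at h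
    exact h.symm
  calc ∫ g, ‖g‖ ^ (2 * (k + 1)) ∂(stdGaussian d)
      ≤ ∫ g, (d : ℝ) ^ k * ∑ i, g i ^ (2 * (k + 1)) ∂(stdGaussian d) := by
        refine integral_mono (integrable_norm_pow_stdGaussian d _)
          ((integrable_finsetSum _ fun i _ => h_int i).const_mul _) fun g => ?_
        simpa using norm_pow_le_card_pow_mul_sum_pow g k
    _ = d ^ (k + 1) * (2 * k + 1 : ℕ)‼ := by
        rw [integral_const_mul, integral_finsetSum _ fun i _ => h_int i]
        simp only [h_moment, Finset.sum_const, Finset.card_univ, Fintype.card_fin, nsmul_eq_mul]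
        ring

lemma sq_mul_lt_of_lt_mul_sqrt_div {σ a K B : ℝ} (hσ : 0 ≤ σ) (hB : 0 < B)
    (h : σ < a * √(K / B)) : σ ^ 2 * B < a ^ 2 * K := by
  have hKB : 0 < K / B := Real.sqrt_ne_zero'.mp (right_ne_zero_of_mul (hσ.trans_lt h).ne')
  calc σ ^ 2 * B < (a * √(K / B)) ^ 2 * B := by gcongr
    _ = a ^ 2 * K := by rw [mul_pow, sq_sqrt hKB.le]; field_simp

theorem expected_error_bound_small_sigma_general
    (d : ℕ) (hd : 1 ≤ d) (L τ : ℝ) (hτ : 0 < τ)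
    (ε c : ℝ) (hε : 0 < ε) (hε1 : ε ≤ 1) (hc1 : c ≤ 1)
    (σ : ℝ) (hσ : 0 < σ)
    (hσsmall : σ < (1 / 35) * Real.sqrt (ε * c / (τ * (d : ℝ) ^ 3 * max L 1))) :
    ∫ g, (σ ^ 4 * τ ^ 2 * ‖g‖ ^ 6 + 2 * σ ^ 2 * τ * L * ‖g‖ ^ 4) ∂(stdGaussian d) ≤ ε := by
  set M := max L 1
  have hM : 1 ≤ M := le_max_right L 1
  have hd_real : (1 : ℝ) ≤ d := by exact_mod_cast hd
  have h_sixth : ∫ g, ‖g‖ ^ 6 ∂(stdGaussian d) ≤ d ^ 3 * 15 :=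
    integral_norm_pow_stdGaussian_le d 2
  have h_fourth : ∫ g, ‖g‖ ^ 4 ∂(stdGaussian d) ≤ d ^ 2 * 3 :=
    integral_norm_pow_stdGaussian_le d 1
  have hA : σ ^ 2 * (τ * d ^ 3 * M) < (1 / 35) ^ 2 * (ε * c) :=
    sq_mul_lt_of_lt_mul_sqrt_div hσ.le (by positivity) hσsmall
  set A := σ ^ 2 * (τ * d ^ 3 * M)
  have hA_nonneg : 0 ≤ A := by positivity
  have hA_le : A ≤ ε / 1225 := by nlinarith [mul_le_of_le_one_right hε.le hc1]
  have h_cube_le : (d : ℝ) ^ 3 ≤ (d ^ 3 * M) ^ 2 := by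
    have : (1 : ℝ) ≤ d ^ 3 * M := one_le_mul_of_one_le_of_one_le (one_le_pow₀ hd_real) hM
    nlinarith
  have h_square_le_cube : (d : ℝ) ^ 2 ≤ d ^ 3 := pow_le_pow_right₀ hd_real (by norm_num)
  rw [integral_add ((integrable_norm_pow_stdGaussian d 6).const_mul _)
    ((integrable_norm_pow_stdGaussian d 4).const_mul _), integral_const_mul, integral_const_mul]
  calc _ ≤ σ ^ 4 * τ ^ 2 * (d ^ 3 * 15) + 2 * σ ^ 2 * τ * M * (d ^ 2 * 3) := by
        gcongr
        exact le_max_left L 1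
    _ ≤ σ ^ 4 * τ ^ 2 * ((d ^ 3 * M) ^ 2 * 15) + 2 * σ ^ 2 * τ * M * (d ^ 3 * 3) := by gcongr
    _ = 15 * A ^ 2 + 6 * A := by ring
    _ ≤ ε := by nlinarith

/-- Expected error bound under the small-σ condition. -/
theorem expected_error_bound_small_sigma
    (d : ℕ) (hd : 1 ≤ d) (L τ : ℝ) (hL : 0 < L) (hτ : 0 < τ)
    (ε c : ℝ) (hε : 0 < ε) (hε1 : ε ≤ 1) (hc : 0 < c) (hc1 : c ≤ 1)
    (σ : ℝ) (hσ : 0 < σ)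
    (hσsmall : σ < (1 / 35) * Real.sqrt (ε * c / (τ * (d : ℝ) ^ 3 * max L 1))) :
    ∫ g, (σ ^ 4 * τ ^ 2 * ‖g‖ ^ 6 + 2 * σ ^ 2 * τ * L * ‖g‖ ^ 4) ∂(stdGaussian d) ≤ ε :=
  expected_error_bound_small_sigma_general d hd L τ hτ ε c hε hε1 hc1 σ hσ hσsmall
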